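/- arXiv:0904.1078 — 2 statements merged into one kernel-verified Lean document; each statement's English description precedes it below -/
import Mathlib

section
/- Let (Ω, F, ℙ) be a probability space, 𝒢 ⊆ F a sub-σ-algebra, a a 𝒢-measurable real random variable, and ε a standard normal random variable independent of 𝒢. Set Z := exp(−aε − a²/2). Then Z is integrable with E[Z | 𝒢] = 1 almost surely and E[Z] = 1, and under the probability measure Q with density Z with respect to ℙ, the random variable ε + a has standard normal distribution N(0,1) and is independent of 𝒢 under Q. -/
open MeasureTheory ProbabilityTheory Real
open scoped ENNReal

/-! Conditionally on `𝒢` the drift `a` is frozen while `ε` stays standard normal. For a constant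
`c`, the density `y ↦ exp (-c y - c² / 2)` tilts `N(0,1)` into `N(-c,1)`, whose shift by `c` is
`N(0,1)` again. Hence `Q (s ∩ {ε + a ∈ B}) = P s * N(0,1) B` for `s ∈ 𝒢` and Borel `B`, and every
claim is read off this product formula: `B = ℝ` gives `Q = P` on `𝒢`, i.e. `E[Z | 𝒢] = 1`;
`s = Ω` gives the law of `ε + a` under `Q`; and the formula itself is the independence. -/

lemma gaussianPDF_mul_ofReal_exp (c y : ℝ) :
    gaussianPDF 0 1 y * ENNReal.ofReal (exp (-(c * y) - c ^ 2 / 2)) = gaussianPDF (-c) 1 y := by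
  simp only [gaussianPDF, gaussianPDFReal]
  rw [← ENNReal.ofReal_mul (by positivity), mul_assoc, ← exp_add]
  congr 3
  push_cast
  ring

lemma gaussianReal_withDensity_exp (c : ℝ) :
    (gaussianReal 0 1).withDensity (fun y => ENNReal.ofReal (exp (-(c * y) - c ^ 2 / 2)))
      = gaussianReal (-c) 1 := by
  rw [gaussianReal_of_var_ne_zero 0 one_ne_zero, gaussianReal_of_var_ne_zero _ one_ne_zero,
    ← withDensity_mul _ (measurable_gaussianPDF 0 1) (by fun_prop)]
  exact congrArg _ (funext (gaussianPDF_mul_ofReal_exp c))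

lemma lintegral_comp_add_mul_exp_gaussianReal (c : ℝ) {g : ℝ → ℝ≥0∞} (hg : Measurable g) :
    ∫⁻ y, g (y + c) * ENNReal.ofReal (exp (-(c * y) - c ^ 2 / 2)) ∂gaussianReal 0 1
      = ∫⁻ y, g y ∂gaussianReal 0 1 := by
  calc _ = ∫⁻ y, g (y + c) ∂(gaussianReal 0 1).withDensity
          (fun y => ENNReal.ofReal (exp (-(c * y) - c ^ 2 / 2))) := by
        rw [lintegral_withDensity_eq_lintegral_mul _ (by fun_prop)
          (g := fun y => g (y + c)) (hg.comp (measurable_add_const c))]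
        simp only [Pi.mul_apply, mul_comm]
    _ = _ := by
        rw [gaussianReal_withDensity_exp, ← lintegral_map hg (measurable_add_const c),
          gaussianReal_map_add_const, neg_add_cancel]

lemma ProbabilityTheory.IndepFun.lintegral_comp_prodMk {Ω α β : Type*} {m0 : MeasurableSpace Ω}
    [MeasurableSpace α] [MeasurableSpace β] {P : Measure Ω} [IsFiniteMeasure P]
    {X : Ω → α} {Y : Ω → β} (hXY : IndepFun X Y P) (hX : Measurable X) (hY : Measurable Y)
    {f : α × β → ℝ≥0∞} (hf : Measurable f) :
    ∫⁻ ω, f (X ω, Y ω) ∂P = ∫⁻ x, ∫⁻ y, f (x, y) ∂(P.map Y) ∂(P.map X) := by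
  rw [← lintegral_map hf (hX.prodMk hY),
    (indepFun_iff_map_prod_eq_prod_map_map hX.aemeasurable hY.aemeasurable).1 hXY,
    lintegral_prod f hf.aemeasurable]

section Girsanov

variable {Ω : Type*} {𝒢 m0 : MeasurableSpace Ω} {P : Measure Ω} [IsFiniteMeasure P] {a ε : Ω → ℝ}

theorem lintegral_mul_comp_add_mul_exp (h𝒢 : 𝒢 ≤ m0) (ha : Measurable[𝒢] a)
    (hε : Measurable ε) (hεlaw : P.map ε = gaussianReal 0 1)
    (hindep : Indep (MeasurableSpace.comap ε inferInstance) 𝒢 P)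
    {f : Ω → ℝ≥0∞} (hf : Measurable[𝒢] f) {g : ℝ → ℝ≥0∞} (hg : Measurable g) :
    ∫⁻ ω, f ω * g (ε ω + a ω) * ENNReal.ofReal (exp (-(a ω * ε ω) - a ω ^ 2 / 2)) ∂P
      = (∫⁻ ω, f ω ∂P) * ∫⁻ y, g y ∂gaussianReal 0 1 := by
  set X : Ω → ℝ≥0∞ × ℝ := fun ω => (f ω, a ω)
  have hX𝒢 : Measurable[𝒢] X := hf.prodMk ha
  have hX : Measurable X := hX𝒢.mono h𝒢 le_rfl
  have hXε : IndepFun X ε P :=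
    indep_of_indep_of_le_left hindep.symm (measurable_iff_comap_le.mp hX𝒢)
  set F : (ℝ≥0∞ × ℝ) × ℝ → ℝ≥0∞ := fun p =>
    p.1.1 * (g (p.2 + p.1.2) * ENNReal.ofReal (exp (-(p.1.2 * p.2) - p.1.2 ^ 2 / 2)))
  have hF : Measurable F := by fun_prop
  calc _ = ∫⁻ ω, F (X ω, ε ω) ∂P := by simp only [F, X, mul_assoc]
    _ = ∫⁻ x, ∫⁻ y, F (x, y) ∂gaussianReal 0 1 ∂(P.map X) := by
        rw [hXε.lintegral_comp_prodMk hX hε hF, hεlaw]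
    _ = ∫⁻ x, x.1 * ∫⁻ y, g y ∂gaussianReal 0 1 ∂(P.map X) := by
        refine lintegral_congr fun x => ?_
        simp only [F]
        rw [lintegral_const_mul _ (by fun_prop), lintegral_comp_add_mul_exp_gaussianReal _ hg]
    _ = _ := by
        rw [lintegral_mul_const _ (by fun_prop), lintegral_map (by fun_prop) hX]

theorem withDensity_exp_inter_preimage_add_eq_mul (h𝒢 : 𝒢 ≤ m0) (ha : Measurable[𝒢] a)
    (hε : Measurable ε) (hεlaw : P.map ε = gaussianReal 0 1)
    (hindep : Indep (MeasurableSpace.comap ε inferInstance) 𝒢 P)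
    {s : Set Ω} (hs : MeasurableSet[𝒢] s) {B : Set ℝ} (hB : MeasurableSet B) :
    P.withDensity (fun ω => ENNReal.ofReal (exp (-(a ω * ε ω) - a ω ^ 2 / 2)))
      (s ∩ (fun ω => ε ω + a ω) ⁻¹' B) = P s * gaussianReal 0 1 B := by
  have hsB : MeasurableSet (s ∩ (fun ω => ε ω + a ω) ⁻¹' B) :=
    (h𝒢 s hs).inter ((hε.add (ha.mono h𝒢 le_rfl)) hB)
  have hprod := lintegral_mul_comp_add_mul_exp h𝒢 ha hε hεlaw hindep
    (f := s.indicator 1) (measurable_const.indicator hs) (measurable_one.indicator hB)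
  rw [lintegral_indicator_one (h𝒢 s hs), lintegral_indicator_one hB] at hprod
  rw [withDensity_apply _ hsB, ← lintegral_indicator hsB, ← hprod]
  refine lintegral_congr fun ω => ?_
  by_cases h1 : ω ∈ s <;> by_cases h2 : ε ω + a ω ∈ B <;> simp [h1, h2]

end Girsanov

section DensityOnSubSigmaAlgebra

variable {Ω : Type*} {m m0 : MeasurableSpace Ω} {P : Measure Ω} {Z : Ω → ℝ}

lemma setIntegral_eq_measureReal_of_withDensity_eq (hZ : ∀ ω, 0 ≤ Z ω) (hZm : Measurable Z)
    {s : Set Ω} (hs : MeasurableSet s)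
    (h : P.withDensity (fun ω => ENNReal.ofReal (Z ω)) s = P s) :
    ∫ ω in s, Z ω ∂P = P.real s := by
  rw [integral_eq_lintegral_of_nonneg_ae (ae_of_all _ hZ) hZm.aestronglyMeasurable,
    ← withDensity_apply _ hs, h, measureReal_def]

lemma integrable_of_withDensity_univ_eq [IsFiniteMeasure P] (hZ : ∀ ω, 0 ≤ Z ω)
    (hZm : Measurable Z) (h : P.withDensity (fun ω => ENNReal.ofReal (Z ω)) .univ = P .univ) :
    Integrable Z P := by
  refine ⟨hZm.aestronglyMeasurable, ?_⟩
  rw [hasFiniteIntegral_iff_ofReal (ae_of_all _ hZ), ← setLIntegral_univ,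
    ← withDensity_apply _ .univ, h]
  exact measure_lt_top _ _

lemma condExp_ae_eq_one_of_withDensity_eq [IsFiniteMeasure P] (hm : m ≤ m0)
    (hZ : ∀ ω, 0 ≤ Z ω) (hZm : Measurable Z)
    (h : ∀ s, MeasurableSet[m] s → P.withDensity (fun ω => ENNReal.ofReal (Z ω)) s = P s) :
    P[Z|m] =ᵐ[P] fun _ => 1 := by
  refine (ae_eq_condExp_of_forall_setIntegral_eq hm
    (integrable_of_withDensity_univ_eq hZ hZm (h _ .univ)) (fun s _ hPs => ?_)
    (fun s hs _ => ?_) aestronglyMeasurable_const).symm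
  · exact integrableOn_const hPs.ne
  · rw [setIntegral_const, setIntegral_eq_measureReal_of_withDensity_eq hZ hZm (hm s hs) (h s hs),
      smul_eq_mul, mul_one]

end DensityOnSubSigmaAlgebra

section ProductFormula

variable {Ω β : Type*} {m m0 : MeasurableSpace Ω} [MeasurableSpace β] {P Q : Measure Ω}
  {ν : Measure β} {Y : Ω → β}

lemma measure_eq_of_measure_inter_preimage_eq_mul [IsProbabilityMeasure ν]
    (h : ∀ s, MeasurableSet[m] s → ∀ B, MeasurableSet B → Q (s ∩ Y ⁻¹' B) = P s * ν B)
    {s : Set Ω} (hs : MeasurableSet[m] s) : Q s = P s := by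
  simpa using h s hs .univ .univ

lemma measure_preimage_eq_of_measure_inter_preimage_eq_mul [IsProbabilityMeasure P]
    (h : ∀ s, MeasurableSet[m] s → ∀ B, MeasurableSet B → Q (s ∩ Y ⁻¹' B) = P s * ν B)
    {B : Set β} (hB : MeasurableSet B) : Q (Y ⁻¹' B) = ν B := by
  simpa using h .univ .univ B hB

lemma map_eq_of_measure_inter_preimage_eq_mul [IsProbabilityMeasure P] (hY : Measurable Y)
    (h : ∀ s, MeasurableSet[m] s → ∀ B, MeasurableSet B → Q (s ∩ Y ⁻¹' B) = P s * ν B) :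
    Q.map Y = ν := by
  ext B hB
  rw [Measure.map_apply hY hB, measure_preimage_eq_of_measure_inter_preimage_eq_mul h hB]

lemma indep_comap_of_measure_inter_preimage_eq_mul [IsProbabilityMeasure P]
    [IsProbabilityMeasure ν]
    (h : ∀ s, MeasurableSet[m] s → ∀ B, MeasurableSet B → Q (s ∩ Y ⁻¹' B) = P s * ν B) :
    Indep (MeasurableSpace.comap Y inferInstance) m Q := by
  rw [Indep_iff]
  rintro _ t ⟨B, hB, rfl⟩ ht
  rw [Set.inter_comm, h t ht B hB, measure_preimage_eq_of_measure_inter_preimage_eq_mul h hB,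
    measure_eq_of_measure_inter_preimage_eq_mul h ht, mul_comm]

end ProductFormula

/-- (One-step discrete Girsanov transformation.) If `a` is
`𝒢`-measurable, `ε` is standard normal and independent of `𝒢`, and
`Z = exp(-aε - a²/2)`, then `Z` is integrable with `E[Z | 𝒢] = 1` a.s. and `E[Z] = 1`,
and under `Q = P.withDensity Z` the random variable `ε + a` is standard normal and
independent of `𝒢`. -/
theorem stmt9 {Ω : Type*} (𝒢 : MeasurableSpace Ω) {m0 : MeasurableSpace Ω}
    (P : Measure Ω) [IsProbabilityMeasure P] (h𝒢 : 𝒢 ≤ m0)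
    (a ε : Ω → ℝ) (hameas : Measurable[𝒢] a)
    (hεmeas : Measurable ε) (hεgauss : Measure.map ε P = gaussianReal 0 1)
    (hindep : Indep (MeasurableSpace.comap ε inferInstance) 𝒢 P)
    (Z : Ω → ℝ) (hZ : ∀ ω, Z ω = Real.exp (-(a ω * ε ω) - a ω ^ 2 / 2))
    (Q : Measure Ω) (hQ : Q = P.withDensity fun ω => ENNReal.ofReal (Z ω)) :
    Integrable Z P ∧ (P[Z | 𝒢] =ᵐ[P] fun _ => 1) ∧ (∫ ω, Z ω ∂P = 1)
    ∧ Measure.map (fun ω => ε ω + a ω) Q = gaussianReal 0 1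
    ∧ Indep (MeasurableSpace.comap (fun ω => ε ω + a ω) inferInstance) 𝒢 Q := by
  obtain rfl : Z = fun ω => exp (-(a ω * ε ω) - a ω ^ 2 / 2) := funext hZ
  subst hQ
  have hprod := fun s (hs : MeasurableSet[𝒢] s) B (hB : MeasurableSet B) =>
    withDensity_exp_inter_preimage_add_eq_mul h𝒢 hameas hεmeas hεgauss hindep hs hB
  have hQ𝒢 := fun s (hs : MeasurableSet[𝒢] s) =>
    measure_eq_of_measure_inter_preimage_eq_mul hprod hs
  have ha : Measurable a := hameas.mono h𝒢 le_rfl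
  have hZ0 : ∀ ω, 0 ≤ exp (-(a ω * ε ω) - a ω ^ 2 / 2) := fun _ => (exp_pos _).le
  have hZm : Measurable fun ω => exp (-(a ω * ε ω) - a ω ^ 2 / 2) := by fun_prop
  refine ⟨integrable_of_withDensity_univ_eq hZ0 hZm (hQ𝒢 _ .univ),
    condExp_ae_eq_one_of_withDensity_eq h𝒢 hZ0 hZm hQ𝒢, ?_,
    map_eq_of_measure_inter_preimage_eq_mul (hεmeas.add ha) hprod,
    indep_comap_of_measure_inter_preimage_eq_mul hprod⟩
  rw [← setIntegral_univ, setIntegral_eq_measureReal_of_withDensity_eq hZ0 hZm .univ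
    (hQ𝒢 _ .univ), probReal_univ]
end

section
/- Consider the GARCH log-price setup: (ε_n)_{n=1}^T i.i.d. standard normal on (Ω, F, ℙ), filtration F_n = σ(ε_1,…,ε_n), predictable processes (μ_n), (σ_n) with σ_n > 0, σ_n² ≥ ω > 0 and |μ_n| ≤ B almost surely, s_n = s_0 + Σ_{k=1}^n (μ_k + σ_k ε_k), and Q the measure with density Z_T := Π_{k=1}^T exp(−(μ_k/σ_k)ε_k − μ_k²/(2σ_k²)) with respect to ℙ. If E[σ_k⁴ε_k⁴] < ∞ for every k ≤ T (finite kurtosis under ℙ), then E_Q[s_n²] < ∞ for every n ≤ T; that is, the Q-martingale of log-prices is square-integrable with respect to Q. -/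
open MeasureTheory ProbabilityTheory Real
open scoped NNReal

/-!
Under `P`, every `s_n` lies in `L⁴`: the drifts are bounded and the volatility terms are in `L⁴`
by the kurtosis assumption. The density `Z_T` lies in `L²`: since `|μ_k / σ_k| ≤ B / √ω₀`,
`Z_T² ≤ ∏ₖ exp (2 B / √ω₀ · |ε_k|)`, a product of independent factors that are integrable
because a Gaussian has exponential moments of every order. Cauchy–Schwarz then bounds
`E_Q[s_n²] = E[Z_T s_n²]`.
-/

lemma Finset.prod_Icc_one_eq_prod_fin {M : Type*} [CommMonoid M] (g : ℕ → M) (T : ℕ) :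
    ∏ k ∈ Finset.Icc 1 T, g k = ∏ i : Fin T, g (i + 1) := by
  rw [Fin.prod_univ_eq_prod_range (fun i => g (i + 1)), Finset.range_eq_Ico,
    Finset.prod_Ico_add', zero_add, Finset.Ico_add_one_right_eq_Icc]

lemma sq_exp_neg_div_mul_sub_le {a b x B ω₀ : ℝ} (hω₀ : 0 < ω₀) (ha : |a| ≤ B)
    (hb : ω₀ ≤ b ^ 2) :
    exp (-(a / b) * x - a ^ 2 / (2 * b ^ 2)) ^ 2 ≤ exp (2 * (B / √ω₀) * |x|) := by
  have hb' : √ω₀ ≤ |b| := by simpa only [sqrt_sq_eq_abs] using sqrt_le_sqrt hb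
  have hab : |a / b| ≤ B / √ω₀ := by
    rw [abs_div]
    exact div_le_div₀ ((abs_nonneg a).trans ha) ha (sqrt_pos.2 hω₀) hb'
  have hlin : -(a / b) * x ≤ B / √ω₀ * |x| := by
    calc -(a / b) * x ≤ |a / b| * |x| := by rw [neg_mul, ← abs_mul]; exact neg_le_abs _
      _ ≤ B / √ω₀ * |x| := mul_le_mul_of_nonneg_right hab (abs_nonneg x)
  have hquad : 0 ≤ a ^ 2 / (2 * b ^ 2) := by positivity
  rw [← exp_nat_mul]
  exact exp_le_exp.2 (by push_cast; linarith)

section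

variable {Ω : Type*} {m0 : MeasurableSpace Ω} {P : Measure Ω}

lemma memLp_natCast_iff_integrable_pow {f : Ω → ℝ} {n : ℕ} (hn : n ≠ 0) (heven : Even n)
    (hf : AEStronglyMeasurable f P) :
    MemLp f n P ↔ Integrable (fun ω => f ω ^ n) P := by
  rw [← integrable_norm_rpow_iff hf (by exact_mod_cast hn) (ENNReal.natCast_ne_top n)]
  simp only [ENNReal.toReal_natCast, rpow_natCast, norm_eq_abs, heven.pow_abs]

lemma ProbabilityTheory.iIndepFun.integrable_finsetProd [IsFiniteMeasure P] {ι : Type*}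
    {X : ι → Ω → ℝ} (hX : iIndepFun X P) (hXm : ∀ i, Measurable (X i))
    (hXi : ∀ i, Integrable (X i) P) (s : Finset ι) : Integrable (∏ i ∈ s, X i) P := by
  classical
  induction s using Finset.induction_on with
  | empty => rw [Finset.prod_empty]; exact integrable_const (1 : ℝ)
  | insert j s hj ih =>
    rw [Finset.prod_insert hj, mul_comm]
    exact (hX.indepFun_finsetProd_of_notMem hXm hj).integrable_mul ih (hXi j)

lemma integrable_exp_mul_abs_of_map_eq_gaussianReal [IsProbabilityMeasure P] {X : Ω → ℝ}
    {m : ℝ} {v : ℝ≥0} (hX : P.map X = gaussianReal m v) (t : ℝ) :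
    Integrable (fun ω => exp (t * |X ω|)) P := by
  have hexp : ∀ u, Integrable (fun ω => exp (u * X ω)) P := fun u => by
    rw [← mgf_pos_iff, mgf_gaussianReal hX]
    exact exp_pos _
  exact integrable_exp_mul_abs (hexp t) (hexp (-t))

lemma integrable_sq_withDensity_ofReal_of_memLp {f Z : Ω → ℝ} (hf : MemLp f 4 P)
    (hZ : MemLp Z 2 P) (hZm : Measurable Z) (hZnn : ∀ ω, 0 ≤ Z ω) :
    Integrable (fun ω => f ω ^ 2) (P.withDensity fun ω => ENNReal.ofReal (Z ω)) := by
  rw [integrable_withDensity_iff hZm.ennreal_ofReal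
    (ae_of_all _ fun _ => ENNReal.ofReal_lt_top)]
  have hf4 : Integrable (fun ω => f ω ^ 4) P :=
    (memLp_natCast_iff_integrable_pow (n := 4) (by norm_num) ⟨2, rfl⟩ hf.1).1 hf
  have hf2 : MemLp (fun ω => f ω ^ 2) 2 P := by
    refine (memLp_two_iff_integrable_sq (f := fun ω => f ω ^ 2) (hf.1.pow 2)).2 ?_
    simpa only [← pow_mul] using hf4
  simpa only [Pi.mul_def, ENNReal.toReal_ofReal (hZnn _)] using hf2.integrable_mul hZ

lemma memLp_four_const_add_sum [IsFiniteMeasure P] (s0 B : ℝ) {μ X : ℕ → Ω → ℝ}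
    {I : Finset ℕ} (hμ : ∀ k ∈ I, AEStronglyMeasurable (μ k) P)
    (hμB : ∀ k ∈ I, ∀ᵐ ω ∂P, |μ k ω| ≤ B) (hX : ∀ k ∈ I, AEStronglyMeasurable (X k) P)
    (hX4 : ∀ k ∈ I, Integrable (fun ω => X k ω ^ 4) P) :
    MemLp (fun ω => s0 + ∑ k ∈ I, (μ k ω + X k ω)) 4 P := by
  refine (memLp_const s0).add (memLp_finsetSum _ fun k hk => ?_)
  have hμk : MemLp (μ k) 4 P :=
    .of_bound (hμ k hk) B ((hμB k hk).mono fun ω h => by rwa [norm_eq_abs])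
  have hXk : MemLp (X k) 4 P := by
    exact_mod_cast (memLp_natCast_iff_integrable_pow (n := 4) (by norm_num) ⟨2, rfl⟩
      (hX k hk)).2 (hX4 k hk)
  exact hμk.add hXk

noncomputable def girsanovDensity (T : ℕ) (μ σ ε : ℕ → Ω → ℝ) (ω : Ω) : ℝ :=
  ∏ k ∈ Finset.Icc 1 T, exp (-(μ k ω / σ k ω) * ε k ω - μ k ω ^ 2 / (2 * σ k ω ^ 2))

variable {T : ℕ} {μ σ ε : ℕ → Ω → ℝ}

lemma girsanovDensity_nonneg (ω : Ω) : 0 ≤ girsanovDensity T μ σ ε ω :=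
  Finset.prod_nonneg fun _ _ => (exp_pos _).le

lemma measurable_girsanovDensity (hμ : ∀ k, 1 ≤ k → Measurable (μ k))
    (hσ : ∀ k, 1 ≤ k → Measurable (σ k)) (hε : ∀ k, Measurable (ε k)) :
    Measurable (girsanovDensity T μ σ ε) := by
  refine Finset.measurable_prod _ fun k hk => ?_
  have hμk := hμ k (Finset.mem_Icc.1 hk).1
  have hσk := hσ k (Finset.mem_Icc.1 hk).1
  have hεk := hε k
  fun_prop

lemma integrable_prod_exp_mul_abs [IsProbabilityMeasure P] {m : ℝ} {v : ℝ≥0}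
    (hε : ∀ k, Measurable (ε k)) (hindep : iIndepFun (fun i : Fin T => ε (i + 1)) P)
    (hgauss : ∀ k, 1 ≤ k → k ≤ T → P.map (ε k) = gaussianReal m v) (c : ℝ) :
    Integrable (fun ω => ∏ k ∈ Finset.Icc 1 T, exp (c * |ε k ω|)) P := by
  have hg : Measurable fun x : ℝ => exp (c * |x|) := by fun_prop
  have hprod := (hindep.comp _ fun _ => hg).integrable_finsetProd (fun _ => hg.comp (hε _))
    (fun i => integrable_exp_mul_abs_of_map_eq_gaussianReal
      (hgauss _ (Nat.le_add_left 1 i) i.isLt) c) Finset.univ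
  convert hprod using 1
  ext ω
  simp only [Finset.prod_apply, Function.comp_apply, Finset.prod_Icc_one_eq_prod_fin]

lemma memLp_two_girsanovDensity [IsProbabilityMeasure P] {m B ω₀ : ℝ} {v : ℝ≥0}
    (hω₀ : 0 < ω₀) (hμ : ∀ k, 1 ≤ k → Measurable (μ k)) (hσ : ∀ k, 1 ≤ k → Measurable (σ k))
    (hε : ∀ k, Measurable (ε k)) (hindep : iIndepFun (fun i : Fin T => ε (i + 1)) P)
    (hgauss : ∀ k, 1 ≤ k → k ≤ T → P.map (ε k) = gaussianReal m v)
    (hbound : ∀ k, 1 ≤ k → k ≤ T → ∀ᵐ ω ∂P, |μ k ω| ≤ B ∧ ω₀ ≤ σ k ω ^ 2) :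
    MemLp (girsanovDensity T μ σ ε) 2 P := by
  have hZm : AEStronglyMeasurable (girsanovDensity T μ σ ε) P :=
    (measurable_girsanovDensity hμ hσ hε).aestronglyMeasurable
  refine (memLp_two_iff_integrable_sq hZm).2 <|
    (integrable_prod_exp_mul_abs hε hindep hgauss (2 * (B / √ω₀))).mono' (hZm.pow 2) ?_
  have hall : ∀ᵐ ω ∂P, ∀ k ∈ Finset.Icc 1 T, |μ k ω| ≤ B ∧ ω₀ ≤ σ k ω ^ 2 :=
    (Filter.eventually_all_finset _).2 fun k hk =>
      hbound k (Finset.mem_Icc.1 hk).1 (Finset.mem_Icc.1 hk).2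
  filter_upwards [hall] with ω hω
  rw [norm_of_nonneg (sq_nonneg _), girsanovDensity, ← Finset.prod_pow]
  exact Finset.prod_le_prod (fun _ _ => sq_nonneg _) fun k hk =>
    sq_exp_neg_div_mul_sub_le hω₀ (hω k hk).1 (hω k hk).2

end

theorem stmt12_general {Ω : Type*} {m0 : MeasurableSpace Ω}
    (P : Measure Ω) [IsProbabilityMeasure P]
    (T : ℕ) (ε : ℕ → Ω → ℝ) (hεmeas : ∀ k, Measurable (ε k))
    (hεindep : iIndepFun (fun i : Fin T => ε (i.val + 1)) P)
    (hεgauss : ∀ k, 1 ≤ k → k ≤ T → Measure.map (ε k) P = gaussianReal 0 1)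
    (F : ℕ → MeasurableSpace Ω)
    (hF : ∀ n, F n = ⨆ k ∈ Finset.Icc 1 n, MeasurableSpace.comap (ε k) inferInstance)
    (μ σ : ℕ → Ω → ℝ)
    (hμpred : ∀ k, 1 ≤ k → Measurable[F (k - 1)] (μ k))
    (hσpred : ∀ k, 1 ≤ k → Measurable[F (k - 1)] (σ k))
    (B ω₀ : ℝ) (hω₀ : 0 < ω₀)
    (hbound : ∀ k, 1 ≤ k → k ≤ T → ∀ᵐ ω ∂P, |μ k ω| ≤ B ∧ ω₀ ≤ σ k ω ^ 2)
    (hkurt : ∀ k, 1 ≤ k → k ≤ T → Integrable (fun ω => (σ k ω * ε k ω) ^ 4) P)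
    (s0 : ℝ) (s : ℕ → Ω → ℝ)
    (hs : ∀ n ω, s n ω = s0 + ∑ k ∈ Finset.Icc 1 n, (μ k ω + σ k ω * ε k ω))
    (Z : Ω → ℝ)
    (hZ : ∀ ω, Z ω = ∏ k ∈ Finset.Icc 1 T,
        Real.exp (-(μ k ω / σ k ω) * ε k ω - μ k ω ^ 2 / (2 * σ k ω ^ 2)))
    (Q : Measure Ω) (hQ : Q = P.withDensity fun ω => ENNReal.ofReal (Z ω)) :
    ∀ n, n ≤ T → Integrable (fun ω => s n ω ^ 2) Q := by
  intro n hn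
  have hFle : ∀ j, F j ≤ m0 := fun j => (hF j).symm ▸ iSup₂_le fun k _ => (hεmeas k).comap_le
  have hμm : ∀ k, 1 ≤ k → Measurable (μ k) := fun k hk => (hμpred k hk).mono (hFle _) le_rfl
  have hσm : ∀ k, 1 ≤ k → Measurable (σ k) := fun k hk => (hσpred k hk).mono (hFle _) le_rfl
  have hs4 : MemLp (s n) 4 P := by
    rw [funext (hs n)]
    have hk : ∀ k ∈ Finset.Icc 1 n, 1 ≤ k ∧ k ≤ T := fun k hkn =>
      ⟨(Finset.mem_Icc.1 hkn).1, (Finset.mem_Icc.1 hkn).2.trans hn⟩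
    refine memLp_four_const_add_sum s0 B
      (fun k hkn => (hμm k (hk k hkn).1).aestronglyMeasurable)
      (fun k hkn => (hbound k (hk k hkn).1 (hk k hkn).2).mono fun _ h => h.1)
      (fun k hkn => ((hσm k (hk k hkn).1).mul (hεmeas k)).aestronglyMeasurable)
      fun k hkn => ?_
    simpa only [mul_pow] using hkurt k (hk k hkn).1 (hk k hkn).2
  have hZdef : Z = girsanovDensity T μ σ ε := funext hZ
  subst hQ hZdef
  exact integrable_sq_withDensity_ofReal_of_memLp hs4
    (memLp_two_girsanovDensity hω₀ hμm hσm hεmeas hεindep hεgauss hbound)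
    (measurable_girsanovDensity hμm hσm hεmeas) girsanovDensity_nonneg

/-- In the GARCH log-price setup with `σ_k² ≥ ω₀ > 0` and `|μ_k| ≤ B`
a.s., if the process has finite kurtosis under `P` (`E[σ_k⁴ε_k⁴] < ∞` for all `k ≤ T`),
then the log-prices are square-integrable under the Girsanov-type martingale measure `Q`
with density `Z_T = Π_{k=1}^T exp(-(μ_k/σ_k)ε_k - μ_k²/(2σ_k²))`: `E_Q[s_n²] < ∞` for
every `n ≤ T`. -/
theorem stmt12 {Ω : Type*} {m0 : MeasurableSpace Ω}
    (P : Measure Ω) [IsProbabilityMeasure P]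
    (T : ℕ) (ε : ℕ → Ω → ℝ) (hεmeas : ∀ k, Measurable (ε k))
    (hεindep : iIndepFun (fun i : Fin T => ε (i.val + 1)) P)
    (hεgauss : ∀ k, 1 ≤ k → k ≤ T → Measure.map (ε k) P = gaussianReal 0 1)
    (F : ℕ → MeasurableSpace Ω)
    (hF : ∀ n, F n = ⨆ k ∈ Finset.Icc 1 n, MeasurableSpace.comap (ε k) inferInstance)
    (μ σ : ℕ → Ω → ℝ)
    (hμpred : ∀ k, 1 ≤ k → Measurable[F (k - 1)] (μ k))
    (hσpred : ∀ k, 1 ≤ k → Measurable[F (k - 1)] (σ k))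
    (hσpos : ∀ k ω, 0 < σ k ω)
    (B ω₀ : ℝ) (hω₀ : 0 < ω₀)
    (hbound : ∀ k, 1 ≤ k → k ≤ T → ∀ᵐ ω ∂P, |μ k ω| ≤ B ∧ ω₀ ≤ σ k ω ^ 2)
    (hkurt : ∀ k, 1 ≤ k → k ≤ T → Integrable (fun ω => (σ k ω * ε k ω) ^ 4) P)
    (s0 : ℝ) (s : ℕ → Ω → ℝ)
    (hs : ∀ n ω, s n ω = s0 + ∑ k ∈ Finset.Icc 1 n, (μ k ω + σ k ω * ε k ω))
    (Z : Ω → ℝ)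
    (hZ : ∀ ω, Z ω = ∏ k ∈ Finset.Icc 1 T,
        Real.exp (-(μ k ω / σ k ω) * ε k ω - μ k ω ^ 2 / (2 * σ k ω ^ 2)))
    (Q : Measure Ω) (hQ : Q = P.withDensity fun ω => ENNReal.ofReal (Z ω)) :
    ∀ n, n ≤ T → Integrable (fun ω => s n ω ^ 2) Q :=
  stmt12_general (m0 := m0) P T ε hεmeas hεindep hεgauss F hF μ σ hμpred hσpred B ω₀ hω₀ hbound
    hkurt s0 s hs Z hZ Q hQ
end
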